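/- arXiv:1206.3744 — 2 statements merged into one kernel-verified Lean document; each statement's English description precedes it below -/
import Mathlib

section
/- Let F be a field, f(t) = t^n + c_{n-1}t^{n-1} + ... + c_0 a monic polynomial over F, and d_1,...,d_n elements of F with d_1 + ... + d_n = -c_{n-1}. Then the sequence b_1,...,b_{n-1} in F such that f(t) is the characteristic polynomial of the matrix A (with diagonal d_i, subdiagonal 1's, last column b_1,...,b_{n-1},d_n, zeros elsewhere) is unique: if two choices of (b_1,...,b_{n-1}) yield matrices with characteristic polynomial f, they are equal. -/
open Polynomial

/-- The matrix with diagonal `d`, subdiagonal entries `1`, last column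
entries `b` above the diagonal, and zeros elsewhere. -/
def matA {F : Type*} [Field F] (n : ℕ) (d : Fin n → F) (b : Fin (n - 1) → F) :
    Matrix (Fin n) (Fin n) F :=
  Matrix.of fun i j =>
    if i = j then d i
    else if (i : ℕ) = (j : ℕ) + 1 then 1
    else if (j : ℕ) = n - 1 then (if h : (i : ℕ) < n - 1 then b ⟨i, h⟩ else 0)
    else 0

/-!
Expanding the characteristic determinant of `matA` along its first row gives
`χ(A(d, b)) = (X - d₀) χ(A(d ∘ succ, b ∘ succ)) - b₀`: the only other nonzero entry of that
row is `-b₀` in the last column, whose minor is upper triangular with `-1` on the diagonal.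
Evaluating at `d₀` recovers `b₀`, and cancelling the monic factor `X - d₀` recovers the
characteristic polynomial of the smaller matrix, so `b` is recovered by induction on `n`.
-/

open Matrix

theorem Polynomial.eq_and_eq_of_X_sub_C_mul_sub_C_eq {R : Type*} [CommRing R] {a u v : R}
    {p q : R[X]} (h : (X - C a) * p - C u = (X - C a) * q - C v) : p = q ∧ u = v := by
  have huv : u = v := by simpa using congrArg (eval a) h
  subst huv
  refine ⟨?_, rfl⟩
  rw [← sub_eq_zero, ← (monic_X_sub_C a).mul_right_eq_zero_iff, mul_sub]
  exact sub_eq_zero.mpr (sub_left_injective h)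

theorem Matrix.charmatrix_submatrix {R m n : Type*} [CommRing R] [Fintype m] [DecidableEq m]
    [Fintype n] [DecidableEq n] (M : Matrix n n R) {e : m → n} (he : Function.Injective e) :
    (charmatrix M).submatrix e e = charmatrix (M.submatrix e e) := by
  ext i j : 1
  simp [charmatrix_apply, diagonal_apply, he.eq_iff]

section

variable {F : Type*} [Field F]

theorem matA_submatrix_succ (n : ℕ) (d : Fin (n + 2) → F) (b : Fin (n + 1) → F) :
    (matA (n + 2) d b).submatrix Fin.succ Fin.succ
      = matA (n + 1) (fun i => d i.succ) (fun i => b i.succ) := by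
  ext i j
  simp only [matA, submatrix_apply, of_apply, Fin.val_succ, Fin.ext_iff]
  split_ifs <;> first | rfl | omega

theorem det_charmatrix_matA_submatrix_succ_castSucc (n : ℕ) (d : Fin (n + 2) → F)
    (b : Fin (n + 1) → F) :
    ((charmatrix (matA (n + 2) d b)).submatrix Fin.succ Fin.castSucc).det = (-1) ^ (n + 1) := by
  have hentry : ∀ i j : Fin (n + 1), j < i →
      (charmatrix (matA (n + 2) d b)).submatrix Fin.succ Fin.castSucc i j = 0 := by
    intro i j hji
    rw [Fin.lt_def] at hji
    simp only [submatrix_apply, charmatrix_apply, matA, of_apply, diagonal_apply, Fin.ext_iff,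
      Fin.val_succ, Fin.val_castSucc]
    split_ifs <;> first | omega | simp_all
  have hdiag : ∀ i : Fin (n + 1),
      (charmatrix (matA (n + 2) d b)).submatrix Fin.succ Fin.castSucc i i = -1 := by
    intro i
    simp [matA, Fin.ext_iff]
  rw [det_of_isUpperTriangular hentry, Finset.prod_congr rfl fun i _ => hdiag i]
  simp

theorem charpoly_matA_succ_succ (n : ℕ) (d : Fin (n + 2) → F) (b : Fin (n + 1) → F) :
    (matA (n + 2) d b).charpoly = (X - C (d 0)) *
      (matA (n + 1) (fun i => d i.succ) (fun i => b i.succ)).charpoly - C (b 0) := by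
  have hrow : ∀ j : Fin (n + 2), j ≠ 0 ∧ j ≠ Fin.last (n + 1) →
      charmatrix (matA (n + 2) d b) 0 j = 0 := by
    rintro j ⟨hj0, hjl⟩
    simp only [Ne, Fin.ext_iff, Fin.val_zero, Fin.val_last] at hj0 hjl
    simp only [charmatrix_apply, matA, of_apply, diagonal_apply, Fin.ext_iff, Fin.val_zero]
    split_ifs <;> first | omega | simp_all
  rw [charpoly, det_succ_row_zero, Fintype.sum_eq_add 0 (Fin.last (n + 1)) (by simp [Fin.ext_iff])
    fun j hj => by rw [hrow j hj, mul_zero, zero_mul]]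
  rw [Fin.succAbove_zero, charmatrix_submatrix _ (Fin.succ_injective _), matA_submatrix_succ,
    Fin.succAbove_last, det_charmatrix_matA_submatrix_succ_castSucc]
  have h00 : charmatrix (matA (n + 2) d b) 0 0 = X - C (d 0) := by
    simp [matA]
  have h0l : charmatrix (matA (n + 2) d b) 0 (Fin.last (n + 1)) = -C (b 0) := by
    simp [matA, Fin.ext_iff]
  have hsign : ((-1 : F[X]) ^ (n + 1)) * (-1) ^ (n + 1) = 1 := by
    rw [← mul_pow, neg_one_mul, neg_neg, one_pow]
  rw [h00, h0l, ← charpoly, Fin.val_zero, Fin.val_last]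
  linear_combination (-C (b 0)) * hsign

theorem matA_charpoly_injective (n : ℕ) (d : Fin (n + 1) → F) :
    Function.Injective fun b : Fin n → F => (matA (n + 1) d b).charpoly := by
  induction n with
  | zero => intro b b' _; exact Subsingleton.elim b b'
  | succ n ih =>
    intro b b' h
    simp only [charpoly_matA_succ_succ] at h
    obtain ⟨htail, hhead⟩ := eq_and_eq_of_X_sub_C_mul_sub_C_eq h
    funext i
    exact Fin.cases hhead (congrFun (ih _ htail)) i

end

theorem stmt1 {F : Type*} [Field F] (n : ℕ)
    (c : Fin n → F) (d : Fin n → F)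
    (b b' : Fin (n - 1) → F)
    (hb : (matA n d b).charpoly = X ^ n + ∑ i : Fin n, C (c i) * X ^ (i : ℕ))
    (hb' : (matA n d b').charpoly = X ^ n + ∑ i : Fin n, C (c i) * X ^ (i : ℕ)) :
    b = b' := by
  cases n with
  | zero => exact funext fun i => i.elim0
  | succ n => exact matA_charpoly_injective n d (hb.trans hb'.symm)
end

section
/- Let λ_1,...,λ_n and d_1,...,d_n be real numbers with λ_1 + ... + λ_n = d_1 + ... + d_n. Then there exists an n×n real matrix A with diagonal entries A_{ii} = d_i for all i and characteristic polynomial ∏_{i=1}^n (t - λ_i). -/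
/-!
Write `p_j = ∏_{i<j} (X - x_i)` for the Newton basis with nodes `x`. The matrix with diagonal `x`,
ones on the superdiagonal and `-a_j` in the off-diagonal entries of its last row has characteristic
polynomial `p_{m+1} + ∑_{j<m} a_j p_j`: expanding the determinant of its characteristic matrix along
the last column peels off one term at a time. Given a monic `p` of degree `m + 1` with
`-p.nextCoeff = ∑ d_i`, the polynomial `p - ∏_i (X - d_i)` has degree `< m` because both leading
terms and both next coefficients agree, so it is `∑_{j<m} a_j p_j` for nodes `d`, and the matrix
built from `d` and `a` has diagonal `d` and characteristic polynomial `p`.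
-/

open Polynomial Finset

namespace Matrix

variable {R : Type*} [CommRing R]

section bidiagonalLastRow

variable (x c : ℕ → R)

def bidiagonalLastRow (m : ℕ) : Matrix (Fin (m + 1)) (Fin (m + 1)) R :=
  of fun i j => if (i : ℕ) = m then c j
    else if (i : ℕ) = j then x i else if (i : ℕ) + 1 = j then -1 else 0

lemma bidiagonalLastRow_submatrix_castSucc (m : ℕ) :
    (bidiagonalLastRow x c (m + 1)).submatrix Fin.castSucc Fin.castSucc =
      of fun i j : Fin (m + 1) =>
        if (i : ℕ) = j then x i else if (i : ℕ) + 1 = j then -1 else 0 := by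
  ext i j
  simp [bidiagonalLastRow, Fin.val_castSucc, i.is_lt.ne]

lemma det_bidiagonalLastRow_submatrix_castSucc (m : ℕ) :
    ((bidiagonalLastRow x c (m + 1)).submatrix Fin.castSucc Fin.castSucc).det =
      ∏ i ∈ range (m + 1), x i := by
  rw [bidiagonalLastRow_submatrix_castSucc, det_of_isUpperTriangular,
    ← Fin.prod_univ_eq_prod_range]
  · simp
  · intro i j hji
    have : (j : ℕ) < i := hji
    simp only [of_apply]
    rw [if_neg (by omega), if_neg (by omega)]

lemma bidiagonalLastRow_submatrix_succAbove (m : ℕ) :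
    (bidiagonalLastRow x c (m + 1)).submatrix (Fin.last m).castSucc.succAbove Fin.castSucc =
      bidiagonalLastRow x c m := by
  ext i j
  rw [submatrix_apply]
  rcases Fin.eq_castSucc_or_eq_last i with ⟨i, rfl⟩ | rfl
  · rw [Fin.succAbove_of_castSucc_lt _ _ (Fin.castSucc_lt_castSucc_iff.2 i.castSucc_lt_last)]
    have hi : (i : ℕ) < m := i.is_lt
    simp [bidiagonalLastRow, hi.ne, (hi.trans (Nat.lt_succ_self m)).ne]
  · rw [Fin.succAbove_of_le_castSucc _ _ le_rfl]
    simp [bidiagonalLastRow]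

theorem det_bidiagonalLastRow (m : ℕ) :
    (bidiagonalLastRow x c m).det = ∑ j ∈ range (m + 1), c j * ∏ i ∈ range j, x i := by
  induction m with
  | zero => simp [bidiagonalLastRow]
  | succ m ih =>
    rw [det_succ_column _ (Fin.last _), Fin.sum_univ_castSucc, Fin.sum_univ_castSucc,
      Finset.sum_eq_zero, Fin.succAbove_last, bidiagonalLastRow_submatrix_succAbove, ih,
      det_bidiagonalLastRow_submatrix_castSucc, sum_range_succ _ (m + 1)]
    · simp [bidiagonalLastRow]
    · intro i _
      have hi : (i : ℕ) < m := i.is_lt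
      have : bidiagonalLastRow x c (m + 1) i.castSucc.castSucc (Fin.last _) = 0 := by
        simp only [bidiagonalLastRow, of_apply, Fin.val_castSucc, Fin.val_last]
        rw [if_neg (by omega), if_neg (by omega), if_neg (by omega)]
      simp [this]

end bidiagonalLastRow

section newtonCompanion

variable (x a : ℕ → R)

def newtonCompanion (m : ℕ) : Matrix (Fin (m + 1)) (Fin (m + 1)) R :=
  of fun i j => if (i : ℕ) = j then x i
    else if (i : ℕ) + 1 = j then 1 else if (i : ℕ) = m then -a j else 0

lemma charmatrix_newtonCompanion (m : ℕ) :
    charmatrix (newtonCompanion x a m) = bidiagonalLastRow (fun i => X - C (x i))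
      (fun j => if j = m then X - C (x m) else C (a j)) m := by
  ext i j
  by_cases hij : i = j
  · subst hij
    by_cases him : (i : ℕ) = m <;> simp [newtonCompanion, bidiagonalLastRow, him]
  · have hij' : (i : ℕ) ≠ j := Fin.val_ne_of_ne hij
    simp only [charmatrix_apply_ne _ _ _ hij, newtonCompanion, bidiagonalLastRow, of_apply,
      if_neg hij']
    by_cases him : (i : ℕ) = m
    · simp [him, show (j : ℕ) ≠ m by omega, show m + 1 ≠ j by omega]
    · by_cases hsup : (i : ℕ) + 1 = j <;> simp [him, hsup]

lemma charpoly_newtonCompanion (m : ℕ) :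
    (newtonCompanion x a m).charpoly = ∏ i ∈ range (m + 1), (X - C (x i)) +
      ∑ j ∈ range m, C (a j) * ∏ i ∈ range j, (X - C (x i)) := by
  rw [charpoly, charmatrix_newtonCompanion, det_bidiagonalLastRow, sum_range_succ,
    prod_range_succ, if_pos rfl, add_comm, mul_comm]
  congr 1
  exact sum_congr rfl fun j hj => by rw [if_neg (mem_range.1 hj).ne]

end newtonCompanion

end Matrix

namespace Polynomial

variable {R : Type*} [CommRing R]

lemma degree_sub_lt_of_nextCoeff_eq {p q : R[X]} {m : ℕ} (hp : p.Monic) (hq : q.Monic)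
    (hpm : p.natDegree = m + 1) (hqm : q.natDegree = m + 1) (h : p.nextCoeff = q.nextCoeff) :
    (p - q).degree < m := by
  rw [degree_lt_iff_coeff_zero]
  intro k hk
  rw [coeff_sub, sub_eq_zero]
  rcases hk.eq_or_lt with rfl | hk
  · rwa [nextCoeff_of_natDegree_pos (by omega), nextCoeff_of_natDegree_pos (by omega), hpm, hqm]
      at h
  obtain rfl | hk : k = m + 1 ∨ m + 1 < k := by omega
  · rw [← hpm, hp.coeff_natDegree, hpm, ← hqm, hq.coeff_natDegree]
  · rw [coeff_eq_zero_of_natDegree_lt (by omega), coeff_eq_zero_of_natDegree_lt (by omega)]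

variable [Nontrivial R]

noncomputable def newtonSequence (x : ℕ → R) : Sequence R where
  elems' j := ∏ i ∈ range j, (X - C (x i))
  degree_eq' j := by
    rw [degree_eq_natDegree (monic_prod_X_sub_C x _).ne_zero,
      natDegree_finsetProd_X_sub_C_eq_card, card_range]

lemma exists_eq_sum_C_mul_prod_X_sub_C (x : ℕ → R) {m : ℕ} {r : R[X]} (hr : r.degree < m) :
    ∃ a : ℕ → R, r = ∑ j ∈ range m, C (a j) * ∏ i ∈ range j, (X - C (x i)) := by
  have hspan := (newtonSequence x).span_degreeLT (m := m) fun j _ => by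
    simp [newtonSequence, (monic_prod_X_sub_C x (range j)).leadingCoeff]
  rw [← mem_degreeLT, ← hspan, ← coe_range, Finsupp.mem_span_image_iff_linearCombination]
    at hr
  obtain ⟨a, ha, rfl⟩ := hr
  refine ⟨a, ?_⟩
  rw [Finsupp.linearCombination_apply_of_mem_supported R ha]
  simp [newtonSequence, smul_eq_C_mul]

end Polynomial

open Fin.NatCast in
theorem Matrix.exists_diag_eq_and_charpoly_eq {R : Type*} [CommRing R] [Nontrivial R] {n : ℕ}
    (d : Fin n → R) {p : R[X]} (hp : p.Monic) (hdeg : p.natDegree = n)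
    (hnext : p.nextCoeff = -∑ i, d i) :
    ∃ A : Matrix (Fin n) (Fin n) R, (∀ i, A i i = d i) ∧ A.charpoly = p := by
  cases n with
  | zero => exact ⟨0, finZeroElim, by simp [eq_one_of_monic_natDegree_zero hp hdeg]⟩
  | succ m =>
    -- `d k` reduces `k` modulo `m + 1`; only `k ≤ m` matters below.
    let x : ℕ → R := fun k => d k
    set q := ∏ i ∈ range (m + 1), (X - C (x i))
    have hq : q.Monic := monic_prod_X_sub_C x _
    have hqdeg : q.natDegree = m + 1 := by simp [q]
    have hnext' : p.nextCoeff = q.nextCoeff := by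
      simp [q, hnext, prod_X_sub_C_nextCoeff, x, ← Fin.sum_univ_eq_sum_range]
    obtain ⟨a, ha⟩ := exists_eq_sum_C_mul_prod_X_sub_C x
      (degree_sub_lt_of_nextCoeff_eq hp hq hdeg hqdeg hnext')
    refine ⟨newtonCompanion x a m, fun i => by simp [newtonCompanion, x], ?_⟩
    rw [charpoly_newtonCompanion, ← ha, add_sub_cancel]

theorem stmt9 (n : ℕ) (l d : Fin n → ℝ) (h : ∑ i, l i = ∑ i, d i) :
    ∃ A : Matrix (Fin n) (Fin n) ℝ,
      (∀ i, A i i = d i) ∧ A.charpoly = ∏ i, (X - C (l i)) :=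
  Matrix.exists_diag_eq_and_charpoly_eq d (monic_prod_X_sub_C l _)
    (by simp) (by rw [prod_X_sub_C_nextCoeff, h])
end
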